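/- Let p, q be positive integers and α : (ZMod p) × (ZMod q) → ℝ a probability distribution with α(0,0) = 0. Let L_* be the linear map on the complex matrices indexed by (ZMod p) × (ZMod q) given by L_*(x) = Σ_{(i,j)} α(-i,-j) (J_p^i ⊗ J_q^j) x (J_p^i ⊗ J_q^j)* − x, and let Q be the complex matrix Q = Σ_{(i,j)} α(i,j) (J_p^i ⊗ J_q^j) − I. Then for every t ∈ ℝ and all i, i' ∈ ZMod p, j, j' ∈ ZMod q, the exponential of the endomorphism t·L_* satisfies exp(t·L_*)(E_{(i,j),(i',j')}) = Σ_{(m,n)} (exp(tQ))_{(0,0),(m,n)} E_{(m+i,n+j),(m+i',n+j')}. -/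

import Mathlib

open Matrix Kronecker

noncomputable section

attribute [local instance]
  Matrix.frobeniusNormedAddCommGroup Matrix.frobeniusNormedSpace

/-- The primary permutation (left-shift) matrix `J_p`. -/
def Jmat (p : ℕ) : Matrix (ZMod p) (ZMod p) ℂ :=
  Matrix.of fun i j => if j = i + 1 then 1 else 0

/-- The Kraus operator `J_p^i ⊗ J_q^j`. -/
def Kr (p q : ℕ) [NeZero p] [NeZero q] (i : ZMod p) (j : ZMod q) :
    Matrix (ZMod p × ZMod q) (ZMod p × ZMod q) ℂ :=
  (Jmat p ^ i.val) ⊗ₖ (Jmat q ^ j.val)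

/-- The predual circulant GKSL generator `L_*` associated with `α`, as a linear
endomorphism of the matrix space: `L_*(x) = Σ α(-i,-j) K x Kᴴ − x`. -/
def LstarLin (p q : ℕ) [NeZero p] [NeZero q] (α : ZMod p × ZMod q → ℝ) :
    Matrix (ZMod p × ZMod q) (ZMod p × ZMod q) ℂ →ₗ[ℂ]
      Matrix (ZMod p × ZMod q) (ZMod p × ZMod q) ℂ :=
  (∑ ij : ZMod p × ZMod q,
    (α (-ij.1, -ij.2) : ℂ) •
      (LinearMap.mulLeft ℂ (Kr p q ij.1 ij.2) ∘ₗ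
        LinearMap.mulRight ℂ (Kr p q ij.1 ij.2)ᴴ)) - LinearMap.id

/-- Port helper: the operator space is a topological ring (via its normed-ring structure). -/
instance matCLMIsTopologicalRing (n : Type) [Fintype n] :
    IsTopologicalRing (Matrix n n ℂ →L[ℂ] Matrix n n ℂ) :=
  @NonUnitalSeminormedRing.toIsTopologicalRing _
    (@NonUnitalNormedRing.toNonUnitalSeminormedRing _ (@NormedRing.toNonUnitalNormedRing _
      (ContinuousLinearMap.toNormedRing (𝕜 := ℂ) (E := Matrix n n ℂ))))


/-! The matrix `Φ M := ∑ₙ M₀ₙ E_{n+a, n+c}` spreads the row `0` of `M` along the diagonal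
through `(a, c)`. `L_*` only moves mass along such diagonals, and on them it acts as right
multiplication by `Q` acts on row `0`: `Φ (M Q) = L_* (Φ M)`. Exponentiating this intertwining
relation and evaluating at `M = 1`, where `Φ 1 = E_{a,c}`, gives
`exp (t L_*) E_{a,c} = Φ (exp (t Q))`. -/

open NormedSpace
open scoped Nat

section Exponential

variable {𝕜 V W : Type*} [RCLike 𝕜]
  [NormedAddCommGroup V] [NormedSpace 𝕜 V] [CompleteSpace V]
  [NormedAddCommGroup W] [NormedSpace 𝕜 W] [CompleteSpace W]

lemma hasSum_exp_continuousLinearMap_apply (A : V →L[𝕜] V) (v : V) :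
    HasSum (fun n : ℕ => (n ! : 𝕜)⁻¹ • (A ^ n) v) (exp A v) := by
  rw [exp_eq_tsum 𝕜]
  exact (expSeries_summable' (𝕂 := 𝕜) A).hasSum.mapL (ContinuousLinearMap.apply 𝕜 V v)

lemma map_exp_apply_of_comp_eq (f : V →L[𝕜] W) {A : V →L[𝕜] V} {B : W →L[𝕜] W}
    (h : f ∘L A = B ∘L f) (v : V) : f (exp A v) = exp B (f v) := by
  have hpow : ∀ n : ℕ, f ∘L (A ^ n) = (B ^ n) ∘L f := by
    intro n
    induction n with
    | zero => rfl
    | succ n ih =>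
      rw [pow_succ, pow_succ, ContinuousLinearMap.mul_def, ContinuousLinearMap.mul_def,
        ← ContinuousLinearMap.comp_assoc, ih, ContinuousLinearMap.comp_assoc, h,
        ContinuousLinearMap.comp_assoc]
  refine ((hasSum_exp_continuousLinearMap_apply A v).mapL f).unique ?_
  convert hasSum_exp_continuousLinearMap_apply B (f v) using 2 with n
  rw [f.map_smul, ← ContinuousLinearMap.comp_apply, hpow, ContinuousLinearMap.comp_apply]

lemma exp_mul_flip_apply {𝔸 : Type*} [NormedRing 𝔸] [NormedAlgebra 𝕜 𝔸] [CompleteSpace 𝔸]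
    (S M : 𝔸) : exp ((ContinuousLinearMap.mul 𝕜 𝔸).flip S) M = M * exp S := by
  have hpow : ∀ n : ℕ, ((ContinuousLinearMap.mul 𝕜 𝔸).flip S ^ n) M = M * S ^ n := by
    intro n
    induction n with
    | zero => simp
    | succ n ih =>
      rw [pow_succ', ContinuousLinearMap.mul_def, ContinuousLinearMap.comp_apply, ih,
        ContinuousLinearMap.flip_apply, ContinuousLinearMap.mul_apply', pow_succ, mul_assoc]
  have hterm : (fun n : ℕ => (n ! : 𝕜)⁻¹ • ((ContinuousLinearMap.mul 𝕜 𝔸).flip S ^ n) M) =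
      fun n => M * ((n ! : 𝕜)⁻¹ • S ^ n) := by
    ext n
    rw [hpow, mul_smul_comm]
  refine (hasSum_exp_continuousLinearMap_apply _ M).unique ?_
  rw [exp_eq_tsum 𝕜, hterm]
  exact (expSeries_summable' (𝕂 := 𝕜) S).hasSum.mul_left M

end Exponential

section DiagonalOrbit

variable {G R : Type*} [AddCommGroup G] [DecidableEq G] [CommRing R]

def diagonalOrbit (a c : G) : Matrix G G R →ₗ[R] Matrix G G R where
  toFun M := of fun x y => if x - a = y - c then M 0 (x - a) else 0
  map_add' M N := by
    ext x y
    simp only [of_apply, Matrix.add_apply]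
    split_ifs <;> simp
  map_smul' z M := by
    ext x y
    simp only [of_apply, Matrix.smul_apply]
    split_ifs <;> simp

lemma diagonalOrbit_apply (a c : G) (M : Matrix G G R) (x y : G) :
    diagonalOrbit a c M x y = if x - a = y - c then M 0 (x - a) else 0 :=
  rfl

variable [Fintype G]

lemma diagonalOrbit_eq_sum (a c : G) (M : Matrix G G R) :
    diagonalOrbit a c M = ∑ n : G, M 0 n • single (n + a) (n + c) (1 : R) := by
  ext x y
  rw [diagonalOrbit_apply, Matrix.sum_apply, Finset.sum_eq_single (x - a)]
  · simp [single_apply, eq_sub_iff_add_eq, eq_comm]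
  · intro n _ hn
    simp [← eq_sub_iff_add_eq, hn]
  · simp

lemma diagonalOrbit_one (a c : G) : diagonalOrbit a c 1 = single a c (1 : R) := by
  rw [diagonalOrbit_eq_sum, Finset.sum_eq_single 0]
  · simp
  · intro n _ hn
    rw [one_apply_ne' hn, zero_smul]
  · simp

omit [DecidableEq G] in
lemma mul_of_sub_apply (w : G → R) (M : Matrix G G R) (i j : G) :
    (M * of fun k l => w (l - k)) i j = ∑ m, w m * M i (j - m) := by
  rw [mul_apply]
  refine Fintype.sum_equiv (Equiv.subLeft j) _ _ fun k => ?_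
  simp [mul_comm]

lemma diagonalOrbit_mul_sub_one (w : G → R) {L : Matrix G G R →ₗ[R] Matrix G G R}
    (hL : ∀ X x y, L X x y = ∑ m, w m * X (x - m) (y - m) - X x y) (a c : G) (M : Matrix G G R) :
    diagonalOrbit a c (M * (of (fun k l => w (l - k)) - 1)) = L (diagonalOrbit a c M) := by
  ext x y
  by_cases h : x - a = y - c
  · have hdiag : ∀ m, x - m - a = y - m - c := fun m => by
      rw [sub_right_comm x, sub_right_comm y, h]
    simp only [hL, diagonalOrbit_apply, hdiag, if_pos h, if_true, Matrix.mul_sub, mul_one,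
      Matrix.sub_apply, mul_of_sub_apply]
    simp only [← hdiag, sub_right_comm x _ a]
  · have hdiag : ∀ m, x - m - a ≠ y - m - c := fun m => by
      rwa [sub_right_comm x, sub_right_comm y, Ne, sub_left_inj]
    simp [hL, diagonalOrbit_apply, hdiag, h]

end DiagonalOrbit

section Translation

variable {G R : Type*} [AddCommGroup G] [DecidableEq G] [CommRing R] [StarRing R]

lemma conjTranspose_toMatrix_toPEquiv_addRight (g : G) :
    (Equiv.addRight g).toPEquiv.toMatrixᴴ = (Equiv.addRight g).symm.toPEquiv.toMatrix (α := R) := by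
  rw [conjTranspose, ← PEquiv.toMatrix_symm, Equiv.toPEquiv_symm]
  exact PEquiv.map_toMatrix (starRingEnd R) (Equiv.addRight g).toPEquiv.symm

variable [Fintype G]

lemma toMatrix_toPEquiv_addRight_mul_mul_conjTranspose (g : G) (M : Matrix G G R) :
    (Equiv.addRight g).toPEquiv.toMatrix * M * (Equiv.addRight g).toPEquiv.toMatrixᴴ =
      M.submatrix (· + g) (· + g) := by
  rw [conjTranspose_toMatrix_toPEquiv_addRight, PEquiv.toMatrix_toPEquiv_mul,
    PEquiv.mul_toMatrix_toPEquiv]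
  ext k l
  simp

omit [StarRing R] in
lemma sum_smul_toMatrix_toPEquiv_addRight (w : G → R) :
    ∑ g, w g • (Equiv.addRight g).toPEquiv.toMatrix = of fun k l => w (l - k) := by
  ext k l
  rw [Matrix.sum_apply, Finset.sum_eq_single (l - k)]
  · simp [PEquiv.toMatrix_apply]
  · rintro g - hg
    simp only [Matrix.smul_apply, PEquiv.toMatrix_apply, Equiv.toPEquiv_apply, Option.mem_def,
      Option.some.injEq, Equiv.coe_addRight]
    rw [if_neg (fun h => hg (eq_sub_of_add_eq' h)), smul_zero]
  · simp

end Translation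

section Circulant

variable (p q : ℕ) [NeZero p] [NeZero q]

lemma Jmat_pow (n : ℕ) : Jmat p ^ n = (Equiv.addRight (n : ZMod p)).toPEquiv.toMatrix := by
  induction n with
  | zero => ext; simp [PEquiv.toMatrix_apply, one_apply]
  | succ n ih =>
    rw [pow_succ, ih, PEquiv.toMatrix_toPEquiv_mul]
    ext a c
    simp [Jmat, PEquiv.toMatrix_apply, add_assoc, eq_comm]

lemma Kr_eq_toMatrix_toPEquiv (i : ZMod p) (j : ZMod q) :
    Kr p q i j = (Equiv.addRight (i, j)).toPEquiv.toMatrix := by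
  ext ⟨a, b⟩ ⟨c, d⟩
  simp [Kr, Jmat_pow, PEquiv.toMatrix_apply, ← ite_and, and_comm]

lemma LstarLin_apply (α : ZMod p × ZMod q → ℝ)
    (M : Matrix (ZMod p × ZMod q) (ZMod p × ZMod q) ℂ) (x y : ZMod p × ZMod q) :
    LstarLin p q α M x y = ∑ m, (α m : ℂ) * M (x - m) (y - m) - M x y := by
  simp only [LstarLin, LinearMap.sub_apply, LinearMap.id_apply, LinearMap.sum_apply,
    LinearMap.smul_apply, LinearMap.comp_apply, LinearMap.mulLeft_apply,
    LinearMap.mulRight_apply, Matrix.sub_apply, Matrix.sum_apply, Matrix.smul_apply,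
    Kr_eq_toMatrix_toPEquiv, ← mul_assoc, toMatrix_toPEquiv_addRight_mul_mul_conjTranspose]
  congr 1
  exact Fintype.sum_equiv (Equiv.neg _) _ _ fun m => by
    simp only [Equiv.neg_apply, sub_neg_eq_add, submatrix_apply, smul_eq_mul]
    rfl

end Circulant

attribute [local instance] Matrix.frobeniusNormedRing Matrix.frobeniusNormedAlgebra

theorem stmt12_general (p q : ℕ) [NeZero p] [NeZero q]
    (α : ZMod p × ZMod q → ℝ)
    (Q : Matrix (ZMod p × ZMod q) (ZMod p × ZMod q) ℂ)
    (hQ : Q = (∑ ij : ZMod p × ZMod q, (α ij : ℂ) • Kr p q ij.1 ij.2) - 1) :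
    ∀ (t : ℝ) (i i' : ZMod p) (j j' : ZMod q),
      NormedSpace.exp
          ((t : ℂ) • (LinearMap.toContinuousLinearMap (LstarLin p q α)))
          (Matrix.single (i, j) (i', j') (1 : ℂ)) =
        ∑ mn : ZMod p × ZMod q,
          NormedSpace.exp ((t : ℂ) • Q) (0, 0) mn •
            Matrix.single (mn.1 + i, mn.2 + j) (mn.1 + i', mn.2 + j') (1 : ℂ) := by
  intro t i i' j j'
  have hQ' : Q = of (fun k l => (α (l - k) : ℂ)) - 1 := by
    rw [hQ]
    simp only [Kr_eq_toMatrix_toPEquiv, sum_smul_toMatrix_toPEquiv_addRight (fun g => (α g : ℂ))]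
  let Φ := LinearMap.toContinuousLinearMap (diagonalOrbit (R := ℂ) (i, j) (i', j'))
  have hΦ : Φ ∘L (ContinuousLinearMap.mul ℂ _).flip ((t : ℂ) • Q) =
      ((t : ℂ) • LinearMap.toContinuousLinearMap (LstarLin p q α)) ∘L Φ := by
    ext1 M
    change diagonalOrbit _ _ (M * ((t : ℂ) • Q)) = (t : ℂ) • LstarLin p q α (diagonalOrbit _ _ M)
    rw [mul_smul_comm, map_smul, hQ', diagonalOrbit_mul_sub_one _ (LstarLin_apply p q α)]
  have hexp : diagonalOrbit (i, j) (i', j') (exp ((t : ℂ) • Q)) =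
      exp ((t : ℂ) • LinearMap.toContinuousLinearMap (LstarLin p q α)) (single (i, j) (i', j') 1) := by
    have h := map_exp_apply_of_comp_eq Φ hΦ 1
    rw [exp_mul_flip_apply, one_mul] at h
    rw [← diagonalOrbit_one]
    exact h
  rw [diagonalOrbit_eq_sum] at hexp
  exact hexp.symm

theorem stmt12 (p q : ℕ) [NeZero p] [NeZero q]
    (α : ZMod p × ZMod q → ℝ) (hα : ∀ ij, 0 ≤ α ij)
    (hsum : ∑ ij : ZMod p × ZMod q, α ij = 1) (h0 : α (0, 0) = 0)
    (Q : Matrix (ZMod p × ZMod q) (ZMod p × ZMod q) ℂ)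
    (hQ : Q = (∑ ij : ZMod p × ZMod q, (α ij : ℂ) • Kr p q ij.1 ij.2) - 1) :
    ∀ (t : ℝ) (i i' : ZMod p) (j j' : ZMod q),
      NormedSpace.exp
          ((t : ℂ) • (LinearMap.toContinuousLinearMap (LstarLin p q α)))
          (Matrix.single (i, j) (i', j') (1 : ℂ)) =
        ∑ mn : ZMod p × ZMod q,
          NormedSpace.exp ((t : ℂ) • Q) (0, 0) mn •
            Matrix.single (mn.1 + i, mn.2 + j) (mn.1 + i', mn.2 + j') (1 : ℂ) :=
  stmt12_general p q α Q hQ
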